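/- Suppose the atypical roots of λ are totally c-related, i.e., c_{s,t} = c for all 1 ≤ s < t ≤ r. Then the set Θ^λ of Definition 3.4 equals {(1, 2, ..., p, 0, ..., 0) | p = 0, 1, ..., r} and hence has cardinality r + 1. -/

import Mathlib

/-- The three possible relationships between two atypical roots. -/
inductive NQC
  | n : NQC
  | q : NQC
  | c : NQC
deriving DecidableEq

/-- The set `Θ^λ` of Definition 3.4, for an `r`-fold atypical weight whose
nqc-relations are given by `crel` (with `crel s t` for `1 ≤ s ≤ t ≤ r`).
Tuples are modelled as functions `θ : ℕ → ℕ` supported on `{1,...,r}` with `θ s ≤ s`.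
For each `s` with `θ s ≠ 0` the conditions (3.13)-(3.16) must hold:
(3.13) `c_{s-θ_s,s} ≠ c` (omitted when `θ_s = s`) and `c_{s+1-θ_s,s} ≠ n`;
for every `p ∈ [s+1-θ_s, s-1]`:
(3.14) `θ_p ≤ θ_s - s + p`, with equality only if `c_{p,s} = c`;
(3.15) if `c_{p,s} ≠ n` then `θ_p ≠ 0` or there is `p' ∈ [p+1,s]` with `c_{p,p'} = q`
and `θ_{p'} ≥ p'+1-p`,
(3.16) with the exception that `p = s+1-θ_s < s` and `c_{p,s} = q` forces `θ_p = 0`. -/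
def ThetaSet (r : ℕ) (crel : ℕ → ℕ → NQC) : Set (ℕ → ℕ) :=
  {θ | (∀ s, 1 ≤ s → s ≤ r → θ s ≤ s) ∧ (∀ s, ¬(1 ≤ s ∧ s ≤ r) → θ s = 0) ∧
    ∀ s, 1 ≤ s → s ≤ r → θ s ≠ 0 →
      (θ s < s → crel (s - θ s) s ≠ NQC.c) ∧
      crel (s + 1 - θ s) s ≠ NQC.n ∧
      ∀ p, s + 1 - θ s ≤ p → p ≤ s - 1 →
        (θ p + s ≤ θ s + p) ∧
        (θ p + s = θ s + p → crel p s = NQC.c) ∧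
        (crel p s ≠ NQC.n →
          ((p = s + 1 - θ s ∧ crel p s = NQC.q) → θ p = 0) ∧
          (¬(p = s + 1 - θ s ∧ crel p s = NQC.q) →
            θ p ≠ 0 ∨ ∃ p', p + 1 ≤ p' ∧ p' ≤ s ∧ crel p p' = NQC.q ∧ p' + 1 ≤ θ p' + p))}

/-!
When all atypical roots are c-related, condition (3.13) rules out `0 < θ_s < s`, so every
entry is `0` or `s`; and (3.15) at a position with `θ_s = s` can no longer be met through a
q-related `p'`, so it forces `θ_p ≠ 0`, i.e. `θ_p = p`, for every `p < s`. Hence `θ` is a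
prefix `(1, 2, …, p, 0, …, 0)`, and each such prefix satisfies all the conditions.
-/

def IsTotallyCRelated (r : ℕ) (crel : ℕ → ℕ → NQC) : Prop :=
  ∀ s t, 1 ≤ s → s < t → t ≤ r → crel s t = NQC.c

def prefixTuple (p : ℕ) : ℕ → ℕ := fun s => if s ≤ p then s else 0

lemma prefixTuple_injective : Function.Injective prefixTuple := by
  intro a b hab
  have ha := congrFun hab a
  have hb := congrFun hab b
  simp only [prefixTuple] at ha hb
  split_ifs at ha hb <;> omega

lemma prefixTuple_eq_iff {θ : ℕ → ℕ} {p : ℕ} :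
    prefixTuple p = θ ↔
      (∀ s, 1 ≤ s → s ≤ p → θ s = s) ∧ (∀ s, ¬(1 ≤ s ∧ s ≤ p) → θ s = 0) := by
  constructor
  · rintro rfl
    refine ⟨fun s _ hs => if_pos hs, fun s hs => ?_⟩
    simp only [prefixTuple]
    split_ifs <;> omega
  · rintro ⟨hin, hout⟩
    funext s
    simp only [prefixTuple]
    split_ifs with hs
    · rcases Nat.eq_zero_or_pos s with rfl | hs0
      · exact (hout 0 (by omega)).symm
      · exact (hin s hs0 hs).symm
    · exact (hout s (by omega)).symm

namespace ThetaSet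

variable {r : ℕ} {crel : ℕ → ℕ → NQC} {θ : ℕ → ℕ}

lemma mem_Icc_of_apply_ne_zero (hθ : θ ∈ ThetaSet r crel) {s : ℕ} (hs : θ s ≠ 0) :
    s ∈ Set.Icc 1 r := by
  by_contra h
  exact hs (hθ.2.1 s h)

lemma apply_eq_zero_or_eq_self (htot : IsTotallyCRelated r crel) (hθ : θ ∈ ThetaSet r crel)
    (s : ℕ) : θ s = 0 ∨ θ s = s := by
  by_cases hs : θ s = 0
  · exact Or.inl hs
  obtain ⟨hs1, hsr⟩ := mem_Icc_of_apply_ne_zero hθ hs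
  refine Or.inr (le_antisymm (hθ.1 s hs1 hsr) (not_lt.1 fun hlt => ?_))
  exact (hθ.2.2 s hs1 hsr hs).1 hlt (htot _ s (by omega) (by omega) hsr)

lemma apply_eq_self_of_lt (htot : IsTotallyCRelated r crel) (hθ : θ ∈ ThetaSet r crel)
    {s q : ℕ} (hs : θ s = s) (hq : 1 ≤ q) (hqs : q < s) : θ q = q := by
  have hs0 : θ s ≠ 0 := by omega
  obtain ⟨hs1, hsr⟩ := mem_Icc_of_apply_ne_zero hθ hs0
  have hqs_c : crel q s = NQC.c := htot q s hq hqs hsr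
  have h315 := ((hθ.2.2 s hs1 hsr hs0).2.2 q (by omega) (by omega)).2.2 (by simp [hqs_c])
  have hq0 : θ q ≠ 0 := by
    rcases h315.2 (by simp [hqs_c]) with hq0 | ⟨p', hp'1, hp's, hqp', -⟩
    · exact hq0
    · simp [htot q p' hq (by omega) (by omega)] at hqp'
  exact (apply_eq_zero_or_eq_self htot hθ q).resolve_left hq0

lemma exists_eq_prefixTuple (htot : IsTotallyCRelated r crel) (hθ : θ ∈ ThetaSet r crel) :
    ∃ p ≤ r, θ = prefixTuple p := by
  set p := Nat.findGreatest (fun s => θ s = s) r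
  have hp : θ p = p := Nat.findGreatest_spec (P := fun s => θ s = s) (Nat.zero_le r)
    (hθ.2.1 0 (by omega))
  refine ⟨p, Nat.findGreatest_le r, funext fun s => ?_⟩
  simp only [prefixTuple]
  split_ifs with hsp
  · rcases Nat.eq_zero_or_pos s with rfl | hs1
    · exact hθ.2.1 0 (by omega)
    · rcases hsp.lt_or_eq with hlt | rfl
      · exact apply_eq_self_of_lt htot hθ hp hs1 hlt
      · exact hp
  · by_cases hsr : s ≤ r
    · have hne : θ s ≠ s :=
        Nat.findGreatest_is_greatest (P := fun s => θ s = s) (not_le.1 hsp) hsr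
      exact (apply_eq_zero_or_eq_self htot hθ s).resolve_right hne
    · exact hθ.2.1 s (by omega)

end ThetaSet

lemma prefixTuple_mem_thetaSet {r : ℕ} {crel : ℕ → ℕ → NQC}
    (hdiag : ∀ s, 1 ≤ s → s ≤ r → crel s s = NQC.q) (htot : IsTotallyCRelated r crel)
    {p : ℕ} (hpr : p ≤ r) : prefixTuple p ∈ ThetaSet r crel := by
  refine ⟨fun s _ _ => ?_, fun s hs => ?_, fun s hs1 hsr hs0 => ?_⟩
  · simp only [prefixTuple]; split_ifs <;> omega
  · simp only [prefixTuple]; split_ifs <;> omega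
  have hsp : s ≤ p := by
    by_contra h
    exact hs0 (if_neg h)
  have hθs : prefixTuple p s = s := if_pos hsp
  simp only [hθs, lt_irrefl, IsEmpty.forall_iff, Nat.add_sub_cancel_left, true_and]
  refine ⟨?_, fun q hq1 hqs => ?_⟩
  · rcases hs1.eq_or_lt with rfl | h1s
    · simp [hdiag 1 le_rfl hsr]
    · simp [htot 1 s le_rfl h1s hsr]
  have hθq : prefixTuple p q = q := if_pos (by omega)
  have hqs_c : crel q s = NQC.c := htot q s hq1 (by omega) hsr
  rw [hθq]
  refine ⟨by omega, fun _ => hqs_c, fun _ => ⟨fun h => by simp [hqs_c] at h, fun _ => ?_⟩⟩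
  exact Or.inl (by omega)

theorem thetaSet_eq_image_prefixTuple {r : ℕ} {crel : ℕ → ℕ → NQC}
    (hdiag : ∀ s, 1 ≤ s → s ≤ r → crel s s = NQC.q) (htot : IsTotallyCRelated r crel) :
    ThetaSet r crel = prefixTuple '' Set.Iic r := by
  ext θ
  constructor
  · intro hθ
    obtain ⟨p, hpr, rfl⟩ := ThetaSet.exists_eq_prefixTuple htot hθ
    exact ⟨p, hpr, rfl⟩
  · rintro ⟨p, hpr, rfl⟩
    exact prefixTuple_mem_thetaSet hdiag htot hpr

/-- If the atypical roots of `λ` are totally c-related, then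
`Θ^λ = {(1,2,...,p,0,...,0) | p = 0,...,r}`, of cardinality `r + 1`. -/
theorem thetaSet_totally_c (r : ℕ) (crel : ℕ → ℕ → NQC)
    (hdiag : ∀ s, 1 ≤ s → s ≤ r → crel s s = NQC.q)
    (htot : ∀ s t, 1 ≤ s → s < t → t ≤ r → crel s t = NQC.c) :
    ThetaSet r crel =
      {θ | ∃ p, p ≤ r ∧
        (∀ s, 1 ≤ s → s ≤ p → θ s = s) ∧ (∀ s, ¬(1 ≤ s ∧ s ≤ p) → θ s = 0)} ∧
    Nat.card (ThetaSet r crel) = r + 1 := by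
  rw [thetaSet_eq_image_prefixTuple hdiag htot]
  refine ⟨?_, ?_⟩
  · ext θ
    simp only [Set.mem_image, Set.mem_Iic, Set.mem_ofPred_eq, prefixTuple_eq_iff]
  · rw [Nat.card_image_of_injective prefixTuple_injective, ← Finset.coe_Iic,
      Nat.card_coe_set_eq, Set.ncard_coe_finset, Nat.card_Iic]
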